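/- arXiv:1410.7528 — 5 statements merged into one kernel-verified Lean document; each statement's English description precedes it below -/
import Mathlib

section
/- For λ_c, λ_d, c_s > 0, the function V(b) = ( c_s + (λ_d/(λ_d+λ_c))·( b − (1 − e^{−(λ_d+λ_c)b})/(λ_c+λ_d) ) ) / ( (λ_d/(λ_c+λ_d))·(1 − e^{−(λ_d+λ_c)b}) ), defined for b > 0, attains a global minimum at some b* > 0, and any critical point of V satisfies e^{−(λ_c+λ_d)b}·( 1 + (c_s/λ_d)(λ_c+λ_d)² + b(λ_c+λ_d) ) = 1. -/
open Real Filter Topology Set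

/- Both ends of `(0, ∞)` repel the minimiser: sensing too often makes the sensing cost per
detection `c_s / P(detect) ≥ c_s / (λ_d b)` blow up, sensing too rarely makes the missed ON time
`≥ b - 1/μ` blow up, so the continuous `V` has a global minimum inside. Writing `V = N / D`, the numerator satisfies
`N' = D`, so `V' = 0` reads `D² = N D'`; after clearing denominators this is the stated
equation. -/

/-- Reparametrising `(a, ∞)` by `t ↦ a + exp t` turns both ends into the cocompact filter of `ℝ`. -/
theorem ContinuousOn.exists_isMinOn_Ioi_of_tendsto_atTop {f : ℝ → ℝ} {a : ℝ}
    (hf : ContinuousOn f (Ioi a)) (hleft : Tendsto f (𝓝[>] a) atTop)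
    (hright : Tendsto f atTop atTop) : ∃ x ∈ Ioi a, IsMinOn f (Ioi a) x := by
  set g : ℝ → ℝ := fun t => a + exp t
  have hg_mem : ∀ t, g t ∈ Ioi a := fun t => lt_add_of_pos_right a (exp_pos t)
  have hg_bot : Tendsto g atBot (𝓝[>] a) := by
    refine tendsto_nhdsWithin_iff.mpr ⟨?_, Eventually.of_forall hg_mem⟩
    simpa using tendsto_exp_atBot.const_add a
  have hg_top : Tendsto g atTop atTop := tendsto_atTop_add_const_left _ a tendsto_exp_atTop
  have hfg : Tendsto (f ∘ g) (cocompact ℝ) atTop := by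
    rw [cocompact_eq_atBot_atTop]
    exact (hleft.comp hg_bot).sup (hright.comp hg_top)
  obtain ⟨t, ht⟩ := (hf.comp_continuous (by fun_prop) hg_mem).exists_forall_le hfg
  refine ⟨g t, hg_mem t, fun b (hb : a < b) => ?_⟩
  have hb' : g (Real.log (b - a)) = b := by simp [g, Real.exp_log (sub_pos.mpr hb)]
  simpa [hb'] using ht (Real.log (b - a))

theorem one_sub_exp_neg_pos {x : ℝ} (hx : 0 < x) : 0 < 1 - exp (-x) := by
  simpa using exp_lt_one_iff.mpr (neg_neg_of_pos hx)

theorem one_sub_exp_neg_le (x : ℝ) : 1 - exp (-x) ≤ x := by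
  linarith [add_one_le_exp (-x)]

/-- Probability of finding the channel ON at a sensing epoch, for ON rate `ld` and total
rate `μ = λ_c + λ_d`. -/
noncomputable def detectProb (ld μ b : ℝ) : ℝ :=
  ld / μ * (1 - exp (-μ * b))

noncomputable def cycleCost (ld μ cs b : ℝ) : ℝ :=
  cs + ld / μ * (b - (1 - exp (-μ * b)) / μ)

noncomputable def costPerDetection (ld μ cs : ℝ) : ℝ → ℝ :=
  cycleCost ld μ cs / detectProb ld μ

section

variable {ld μ cs : ℝ}

theorem detectProb_pos (hld : 0 < ld) (hμ : 0 < μ) {b : ℝ} (hb : 0 < b) :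
    0 < detectProb ld μ b := by
  have := one_sub_exp_neg_pos (mul_pos hμ hb)
  unfold detectProb
  rw [neg_mul]
  positivity

theorem detectProb_le (hld : 0 < ld) (hμ : 0 < μ) (b : ℝ) : detectProb ld μ b ≤ ld * b := by
  have h := one_sub_exp_neg_le (μ * b)
  unfold detectProb
  rw [div_mul_eq_mul_div, div_le_iff₀ hμ, neg_mul]
  nlinarith

theorem le_cycleCost (hld : 0 < ld) (hμ : 0 < μ) (b : ℝ) : cs ≤ cycleCost ld μ cs b := by
  have h : (1 - exp (-μ * b)) / μ ≤ b := by
    rw [div_le_iff₀ hμ, neg_mul]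
    linarith [one_sub_exp_neg_le (μ * b)]
  unfold cycleCost
  have : 0 ≤ ld / μ * (b - (1 - exp (-μ * b)) / μ) := by
    have := sub_nonneg.mpr h
    positivity
  linarith

theorem div_mul_le_costPerDetection (hld : 0 < ld) (hμ : 0 < μ) (hcs : 0 < cs) {b : ℝ}
    (hb : 0 < b) : cs / (ld * b) ≤ costPerDetection ld μ cs b :=
  div_le_div₀ (hcs.le.trans (le_cycleCost hld hμ b)) (le_cycleCost hld hμ b)
    (detectProb_pos hld hμ hb) (detectProb_le hld hμ b)

theorem sub_inv_le_costPerDetection (hld : 0 < ld) (hμ : 0 < μ) (hcs : 0 < cs) {b : ℝ}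
    (hb : 0 < b) : b - μ⁻¹ ≤ costPerDetection ld μ cs b := by
  have hD := detectProb_pos hld hμ hb
  rw [costPerDetection, Pi.div_apply, le_div_iff₀ hD]
  have hexcess : cycleCost ld μ cs b - (b - μ⁻¹) * detectProb ld μ b =
      cs + ld / μ * b * exp (-μ * b) := by
    unfold cycleCost detectProb
    field_simp
    ring
  have : 0 ≤ ld / μ * b * exp (-μ * b) := by positivity
  linarith

theorem tendsto_costPerDetection_nhdsGT_zero (hld : 0 < ld) (hμ : 0 < μ) (hcs : 0 < cs) :
    Tendsto (costPerDetection ld μ cs) (𝓝[>] 0) atTop := by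
  have h : Tendsto (fun b : ℝ => cs / (ld * b)) (𝓝[>] 0) atTop := by
    have := tendsto_inv_nhdsGT_zero.const_mul_atTop (div_pos hcs hld)
    refine this.congr fun b => ?_
    field_simp
  refine tendsto_atTop_mono' _ ?_ h
  filter_upwards [self_mem_nhdsWithin] with b hb
  exact div_mul_le_costPerDetection hld hμ hcs hb

theorem tendsto_costPerDetection_atTop (hld : 0 < ld) (hμ : 0 < μ) (hcs : 0 < cs) :
    Tendsto (costPerDetection ld μ cs) atTop atTop := by
  refine tendsto_atTop_mono' _ ?_ (tendsto_atTop_add_const_right _ (-μ⁻¹) tendsto_id)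
  filter_upwards [eventually_gt_atTop 0] with b hb
  exact sub_inv_le_costPerDetection hld hμ hcs hb

theorem continuousOn_costPerDetection (hld : 0 < ld) (hμ : 0 < μ) :
    ContinuousOn (costPerDetection ld μ cs) (Ioi 0) := by
  refine ContinuousOn.div (by unfold cycleCost; fun_prop) (by unfold detectProb; fun_prop) ?_
  exact fun b hb => (detectProb_pos hld hμ hb).ne'

theorem hasDerivAt_exp_neg_mul (μ b : ℝ) :
    HasDerivAt (fun b => exp (-μ * b)) (-μ * exp (-μ * b)) b := by
  simpa [mul_comm] using ((hasDerivAt_id b).const_mul (-μ)).exp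

theorem hasDerivAt_detectProb (hμ : μ ≠ 0) (b : ℝ) :
    HasDerivAt (detectProb ld μ) (ld * exp (-μ * b)) b := by
  refine (((hasDerivAt_const b 1).sub (hasDerivAt_exp_neg_mul μ b)).const_mul (ld / μ)).congr_deriv ?_
  field_simp
  ring

theorem hasDerivAt_cycleCost (hμ : μ ≠ 0) (b : ℝ) :
    HasDerivAt (cycleCost ld μ cs) (detectProb ld μ b) b := by
  have h := (((hasDerivAt_id b).sub (((hasDerivAt_const b 1).sub
    (hasDerivAt_exp_neg_mul μ b)).div_const μ)).const_mul (ld / μ)).const_add cs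
  refine h.congr_deriv ?_
  unfold detectProb
  field_simp
  ring

theorem detectProb_sq_eq_of_deriv_costPerDetection_eq_zero (hμ : μ ≠ 0) {b : ℝ}
    (hD : detectProb ld μ b ≠ 0) (hcrit : deriv (costPerDetection ld μ cs) b = 0) :
    detectProb ld μ b ^ 2 = cycleCost ld μ cs b * (ld * exp (-μ * b)) := by
  have h : HasDerivAt (costPerDetection ld μ cs) _ b :=
    (hasDerivAt_cycleCost hμ b).div (hasDerivAt_detectProb hμ b) hD
  rw [h.deriv, div_eq_zero_iff, or_iff_left (pow_ne_zero 2 hD)] at hcrit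
  linear_combination hcrit

theorem exp_mul_eq_one_of_deriv_costPerDetection_eq_zero (hld : 0 < ld) (hμ : 0 < μ) {b : ℝ}
    (hb : 0 < b) (hcrit : deriv (costPerDetection ld μ cs) b = 0) :
    exp (-μ * b) * (1 + cs / ld * μ ^ 2 + b * μ) = 1 := by
  have h := detectProb_sq_eq_of_deriv_costPerDetection_eq_zero hμ.ne'
    (detectProb_pos hld hμ hb).ne' hcrit
  unfold detectProb cycleCost at h
  field_simp at h ⊢
  linear_combination -h

end

theorem stmt_6 (lc ld cs : ℝ) (hlc : 0 < lc) (hld : 0 < ld) (hcs : 0 < cs)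
    (V : ℝ → ℝ)
    (hV : ∀ b, V b =
      (cs + (ld / (ld + lc)) * (b - (1 - Real.exp (-(ld + lc) * b)) / (lc + ld))) /
        ((ld / (lc + ld)) * (1 - Real.exp (-(ld + lc) * b)))) :
    (∃ bstar > (0 : ℝ), ∀ b > (0 : ℝ), V bstar ≤ V b) ∧
    (∀ b > (0 : ℝ), deriv V b = 0 →
      Real.exp (-(lc + ld) * b) *
        (1 + (cs / ld) * (lc + ld) ^ 2 + b * (lc + ld)) = 1) := by
  have hμ : 0 < lc + ld := add_pos hlc hld
  obtain rfl : V = costPerDetection ld (lc + ld) cs := funext fun b => by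
    rw [hV, add_comm ld lc]
    rfl
  refine ⟨?_, fun b hb hcrit => exp_mul_eq_one_of_deriv_costPerDetection_eq_zero hld hμ hb hcrit⟩
  obtain ⟨bstar, hbstar, hmin⟩ := (continuousOn_costPerDetection hld hμ).exists_isMinOn_Ioi_of_tendsto_atTop
    (tendsto_costPerDetection_nhdsGT_zero hld hμ hcs) (tendsto_costPerDetection_atTop hld hμ hcs)
  exact ⟨bstar, hbstar, fun b hb => hmin hb⟩
end

section
/- Let f_c and f_d be exponential densities with rates λ_c and λ_d. The Laplace transforms M̂_↑(s), M̂_↓(s) of the functions M_↑, M_↓ satisfying the renewal equations M_↑(t) = t∫_t^∞ f_c + ∫₀^t f_c(x)(x + M_↓(t−x))dx and M_↓(t) = (f_d * M_↑)(t) are given by M̂_↓(s) = f_d*(s)·(1 − f_c*(s))/( s²·(1 − f_c*(s) f_d*(s)) ), where f*(s) denotes the Laplace transform of f. -/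
/-!
Both renewal equations become linear equations between Laplace transforms. After weighting by
`e^{-st}` and cutting off at `t = 0`, the causal convolution `∫₀ᵗ k x g (t - x) dx` is an ordinary
convolution on `ℝ`, so its transform is the product of the transforms, and the exponential kernel
has transform `λ / (s + λ)`. Writing `x + M↓(t - x) = t + (M↓ - id)(t - x)`, the first equation
reads `M↑ = id + f_c ⋆ (M↓ - id)`, so `M̂↑ = 1/s² + f_c*(M̂↓ - 1/s²)`, while `M̂↓ = f_d* M̂↑`.
Since `f_c* f_d* < 1` this system has the stated solution.
-/

open Real MeasureTheory intervalIntegral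
open Set
open scoped Convolution

noncomputable section

def LaplaceConvergent (f : ℝ → ℝ) (s : ℝ) : Prop :=
  IntegrableOn (fun t => exp (-s * t) * f t) (Ioi 0)

def laplace (f : ℝ → ℝ) (s : ℝ) : ℝ :=
  ∫ t in Ioi 0, exp (-s * t) * f t

def laplaceIntegrand (f : ℝ → ℝ) (s : ℝ) : ℝ → ℝ :=
  (Ioi 0).indicator fun t => exp (-s * t) * f t

def causalConv (k g : ℝ → ℝ) (t : ℝ) : ℝ :=
  ∫ x in (0 : ℝ)..t, k x * g (t - x)

end

section Laplace

variable {f g : ℝ → ℝ} {s : ℝ}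

lemma laplaceConvergent_iff_integrable_laplaceIntegrand :
    LaplaceConvergent f s ↔ Integrable (laplaceIntegrand f s) :=
  (integrable_indicator_iff measurableSet_Ioi).symm

lemma laplace_eq_integral_laplaceIntegrand : laplace f s = ∫ t, laplaceIntegrand f s t :=
  (MeasureTheory.integral_indicator measurableSet_Ioi).symm

lemma laplace_congr (h : ∀ t > 0, f t = g t) : laplace f s = laplace g s :=
  setIntegral_congr_fun measurableSet_Ioi fun t ht => by simp only [h t ht]

lemma LaplaceConvergent.sub (hf : LaplaceConvergent f s) (hg : LaplaceConvergent g s) :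
    LaplaceConvergent (f - g) s := by
  simpa only [LaplaceConvergent, IntegrableOn, Pi.sub_def, mul_sub] using Integrable.sub hf hg

lemma laplace_add (hf : LaplaceConvergent f s) (hg : LaplaceConvergent g s) :
    laplace (f + g) s = laplace f s + laplace g s := by
  simpa only [laplace, Pi.add_apply, mul_add] using integral_add hf hg

lemma laplace_sub (hf : LaplaceConvergent f s) (hg : LaplaceConvergent g s) :
    laplace (f - g) s = laplace f s - laplace g s := by
  simpa only [laplace, Pi.sub_apply, mul_sub] using integral_sub hf hg

lemma laplaceConvergent_of_abs_le_linear (hs : 0 < s)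
    (hf : AEStronglyMeasurable f (volume.restrict (Ioi 0))) {C : ℝ}
    (hC : ∀ t ≥ 0, |f t| ≤ C * (1 + t)) : LaplaceConvergent f s := by
  have hexp : IntegrableOn (fun t => exp (-s * t)) (Ioi 0) := exp_neg_integrableOn_Ioi 0 hs
  have htexp : IntegrableOn (fun t => t * exp (-s * t)) (Ioi 0) := by
    simpa using integrableOn_rpow_mul_exp_neg_mul_rpow (s := 1) (p := 1) (by norm_num) one_pos hs
  refine Integrable.mono' ((hexp.add htexp).const_mul C)
    ((continuous_exp.comp (continuous_const.mul continuous_id)).aestronglyMeasurable.mul hf) ?_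
  refine (ae_restrict_iff' measurableSet_Ioi).2 (Filter.Eventually.of_forall fun t ht => ?_)
  rw [norm_mul, norm_of_nonneg (exp_pos _).le, Real.norm_eq_abs]
  calc exp (-s * t) * |f t| ≤ exp (-s * t) * (C * (1 + t)) :=
        mul_le_mul_of_nonneg_left (hC t (le_of_lt ht)) (exp_pos _).le
    _ = C * (exp (-s * t) + t * exp (-s * t)) := by ring

lemma laplaceIntegrand_causalConv (k g : ℝ → ℝ) (s : ℝ) :
    laplaceIntegrand (causalConv k g) s =
      laplaceIntegrand k s ⋆[ContinuousLinearMap.mul ℝ ℝ] laplaceIntegrand g s := by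
  ext t
  have hweight : ∀ x, laplaceIntegrand k s x * laplaceIntegrand g s (t - x) =
      (Ioo 0 t).indicator (fun x => exp (-s * t) * (k x * g (t - x))) x := by
    intro x
    by_cases hx : x ∈ Ioo 0 t
    · have hexp : exp (-s * x) * exp (-s * (t - x)) = exp (-s * t) := by
        rw [← exp_add]; ring_nf
      simp only [laplaceIntegrand, indicator_of_mem hx, mem_Ioi, hx.1, sub_pos.2 hx.2,
        indicator_of_mem]
      linear_combination k x * g (t - x) * hexp
    · rw [indicator_of_notMem hx]
      unfold laplaceIntegrand
      by_cases hx0 : 0 < x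
      · rw [indicator_of_notMem (fun h => hx ⟨hx0, sub_pos.1 h⟩ : t - x ∉ Ioi 0), mul_zero]
      · rw [indicator_of_notMem (show x ∉ Ioi 0 from hx0), zero_mul]
  rw [convolution_mul, funext hweight, MeasureTheory.integral_indicator measurableSet_Ioo]
  rcases le_or_gt t 0 with ht | ht
  · simp [laplaceIntegrand, ht]
  · rw [laplaceIntegrand, indicator_of_mem (mem_Ioi.2 ht), causalConv, integral_of_le ht.le,
      ← integral_Ioc_eq_integral_Ioo, MeasureTheory.integral_const_mul]

lemma LaplaceConvergent.causalConv {k : ℝ → ℝ} (hk : LaplaceConvergent k s)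
    (hg : LaplaceConvergent g s) : LaplaceConvergent (causalConv k g) s := by
  rw [laplaceConvergent_iff_integrable_laplaceIntegrand, laplaceIntegrand_causalConv]
  rw [laplaceConvergent_iff_integrable_laplaceIntegrand] at hk hg
  exact hk.integrable_convolution _ hg

lemma laplace_causalConv {k : ℝ → ℝ} (hk : LaplaceConvergent k s)
    (hg : LaplaceConvergent g s) : laplace (causalConv k g) s = laplace k s * laplace g s := by
  rw [laplaceConvergent_iff_integrable_laplaceIntegrand] at hk hg
  simp only [laplace_eq_integral_laplaceIntegrand, laplaceIntegrand_causalConv]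
  exact integral_convolution _ hk hg

end Laplace

section Exponential

variable {l s : ℝ}

lemma laplaceConvergent_id (hs : 0 < s) : LaplaceConvergent id s :=
  laplaceConvergent_of_abs_le_linear hs measurable_id.aestronglyMeasurable (C := 1)
    fun t ht => by simp [abs_of_nonneg ht]

lemma laplace_id (hs : 0 < s) : laplace id s = 1 / s ^ 2 := by
  have h := integral_rpow_mul_exp_neg_mul_Ioi (a := 2) two_pos hs
  norm_num [Real.Gamma_two] at h
  simp only [laplace, id, mul_comm (exp _)]
  simpa [neg_mul] using h

lemma laplaceConvergent_expKernel (hs : 0 < s) (hl : 0 ≤ l) :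
    LaplaceConvergent (fun x => l * exp (-l * x)) s := by
  refine laplaceConvergent_of_abs_le_linear hs (by fun_prop) (C := l) fun t ht => ?_
  rw [abs_of_nonneg (by positivity)]
  have : exp (-l * t) ≤ 1 := exp_le_one_iff.2 (by nlinarith)
  nlinarith

lemma laplace_expKernel (hsl : 0 < s + l) :
    laplace (fun x => l * exp (-l * x)) s = l / (s + l) := by
  have h := integral_exp_mul_Ioi (a := -(s + l)) (by linarith) 0
  have hexp : ∀ t, exp (-s * t) * (l * exp (-l * t)) = l * exp (-(s + l) * t) := fun t => by
    rw [mul_left_comm, ← exp_add]; ring_nf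
  simp only [laplace, hexp, MeasureTheory.integral_const_mul, h]
  field_simp
  simp

lemma integral_expKernel (l t : ℝ) : ∫ x in (0 : ℝ)..t, l * exp (-l * x) = 1 - exp (-l * t) := by
  have hderiv : ∀ x, HasDerivAt (fun x => -exp (-l * x)) (l * exp (-l * x)) x := fun x => by
    simpa [Pi.neg_def, mul_comm] using ((hasDerivAt_id' x).const_mul (-l)).exp.neg
  rw [integral_eq_sub_of_hasDerivAt (fun x _ => hderiv x)
    (Continuous.intervalIntegrable (by fun_prop) _ _)]
  simp only [neg_mul, mul_zero, exp_zero, sub_neg_eq_add]; ring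

end Exponential

lemma mul_exp_add_integral_eq_add_causalConv {l t : ℝ} {g : ℝ → ℝ}
    (hg : ContinuousOn g (Ici 0)) (ht : 0 ≤ t) :
    t * exp (-l * t) + ∫ x in (0 : ℝ)..t, l * exp (-l * x) * (x + g (t - x)) =
      (id + causalConv (fun x => l * exp (-l * x)) (g - id) : ℝ → ℝ) t := by
  have hsplit : ∀ x, l * exp (-l * x) * (x + g (t - x)) =
      t * (l * exp (-l * x)) + l * exp (-l * x) * (g - id : ℝ → ℝ) (t - x) := fun x => by
    simp only [Pi.sub_apply, id]; ring
  have hcont :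
      ContinuousOn (fun x => l * exp (-l * x) * (g - id : ℝ → ℝ) (t - x)) (uIcc 0 t) := by
    refine (Continuous.continuousOn (by fun_prop)).mul
      ((hg.sub continuousOn_id).comp (by fun_prop) fun x hx => ?_)
    rw [uIcc_of_le ht] at hx
    exact mem_Ici.2 (sub_nonneg.2 hx.2)
  rw [integral_congr fun x _ => hsplit x,
    integral_add (Continuous.intervalIntegrable (by fun_prop) _ _) hcont.intervalIntegrable,
    intervalIntegral.integral_const_mul, integral_expKernel, Pi.add_apply, causalConv, id]
  ring

lemma renewal_pair_solution {a b s A B : ℝ} (hs : s ≠ 0) (hab : a * b ≠ 1)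
    (hA : A = 1 / s ^ 2 + a * (B - 1 / s ^ 2)) (hB : B = b * A) :
    B = b * (1 - a) / (s ^ 2 * (1 - a * b)) := by
  rw [eq_div_iff (mul_ne_zero (pow_ne_zero 2 hs) (sub_ne_zero.2 hab.symm))]
  rw [hA] at hB
  field_simp at hB
  linear_combination hB

theorem stmt_11 (lc ld : ℝ) (hlc : 0 < lc) (hld : 0 < ld)
    (Mup Mdown : ℝ → ℝ)
    (hMupCont : ContinuousOn Mup (Set.Ici 0))
    (hMdownCont : ContinuousOn Mdown (Set.Ici 0))
    (hMupGrowth : ∃ C > (0 : ℝ), ∀ t ≥ (0 : ℝ), |Mup t| ≤ C * (1 + t))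
    (hMdownGrowth : ∃ C > (0 : ℝ), ∀ t ≥ (0 : ℝ), |Mdown t| ≤ C * (1 + t))
    (hUp : ∀ t ≥ (0 : ℝ),
      Mup t = t * Real.exp (-lc * t) +
        ∫ x in (0 : ℝ)..t, lc * Real.exp (-lc * x) * (x + Mdown (t - x)))
    (hDown : ∀ t ≥ (0 : ℝ),
      Mdown t = ∫ x in (0 : ℝ)..t, ld * Real.exp (-ld * x) * Mup (t - x)) :
    ∀ s > (0 : ℝ),
      (∫ t in Set.Ioi (0 : ℝ), Real.exp (-s * t) * Mdown t) =
        (ld / (s + ld)) * (1 - lc / (s + lc)) /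
          (s ^ 2 * (1 - (lc / (s + lc)) * (ld / (s + ld)))) := by
  intro s hs
  obtain ⟨C₁, -, hC₁⟩ := hMupGrowth
  obtain ⟨C₂, -, hC₂⟩ := hMdownGrowth
  have hup : LaplaceConvergent Mup s := laplaceConvergent_of_abs_le_linear hs
    ((hMupCont.mono Ioi_subset_Ici_self).aestronglyMeasurable measurableSet_Ioi) hC₁
  have hdown : LaplaceConvergent Mdown s := laplaceConvergent_of_abs_le_linear hs
    ((hMdownCont.mono Ioi_subset_Ici_self).aestronglyMeasurable measurableSet_Ioi) hC₂
  have hid := laplaceConvergent_id hs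
  have hkc := laplaceConvergent_expKernel hs hlc.le
  have hA : laplace Mup s = 1 / s ^ 2 + lc / (s + lc) * (laplace Mdown s - 1 / s ^ 2) := by
    rw [laplace_congr fun t ht => (hUp t ht.le).trans
        (mul_exp_add_integral_eq_add_causalConv hMdownCont ht.le),
      laplace_add hid (hkc.causalConv (hdown.sub hid)), laplace_causalConv hkc (hdown.sub hid),
      laplace_sub hdown hid, laplace_id hs, laplace_expKernel (by linarith)]
  have hB : laplace Mdown s = ld / (s + ld) * laplace Mup s := by
    rw [laplace_congr (g := causalConv (fun x => ld * exp (-ld * x)) Mup)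
        fun t ht => hDown t ht.le,
      laplace_causalConv (laplaceConvergent_expKernel hs hld.le) hup,
      laplace_expKernel (by linarith)]
  have hab : lc / (s + lc) * (ld / (s + ld)) < 1 :=
    mul_lt_one_of_nonneg_of_lt_one_left (by positivity)
      ((div_lt_one (by linarith)).2 (by linarith)) ((div_le_one (by linarith)).2 (by linarith))
  exact renewal_pair_solution hs.ne' hab.ne hA hB
end

section
/- The function t ↦ (λ_d/(λ_d+λ_c))·( t − (1 − e^{−(λ_d+λ_c)t})/(λ_c+λ_d) ) is the unique continuous solution M_↓ of the convolution system M_↑(t) = t e^{−λ_c t} + ∫₀^t λ_c e^{−λ_c x}(x + M_↓(t−x))dx, M_↓(t) = ∫₀^t λ_d e^{−λ_d x} M_↑(t−x)dx, among continuous functions of at most linear growth. -/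
/-!
Closed forms are checked by integrating exponential-times-affine functions explicitly. For
uniqueness, the difference `(D, U)` of two solutions solves the homogeneous system. Substituting
`u = t - x` rewrites it as `D t = λ_d e^{-λ_d t} Q t`, `U t = λ_c e^{-λ_c t} P t`, where `P`, `Q`
are the primitives of `e^{λ_c u} D u` and `e^{λ_d u} U u`. Hence `(P, Q)` solves a linear ODE
with bounded coefficients on `[0, T]` and zero initial value, so it vanishes by Grönwall.
-/

open Real MeasureTheory intervalIntegral Set

lemma integral_exp_kernel_comp_sub (c r : ℝ) (g : ℝ → ℝ) :
    ∫ x in (0 : ℝ)..r, c * exp (-c * x) * g (r - x) =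
      c * exp (-c * r) * ∫ u in (0 : ℝ)..r, exp (c * u) * g u := by
  have h := integral_comp_sub_left (fun u => c * exp (-c * (r - u)) * g u) r (a := 0) (b := r)
  simp only [sub_sub_cancel, sub_self, sub_zero] at h
  rw [h, ← intervalIntegral.integral_const_mul]
  congr 1 with u
  rw [show -c * (r - u) = -c * r + c * u by ring, exp_add]
  ring

lemma integral_exp_kernel_affine_add_exp {c s : ℝ} (hc : c ≠ 0) (hcs : s ≠ c) (a b k t : ℝ) :
    ∫ x in (0 : ℝ)..t, c * exp (-c * x) * (a + b * (t - x) + k * exp (-s * (t - x))) =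
      a * (1 - exp (-c * t)) + b * (t - (1 - exp (-c * t)) / c) +
        k * c * (exp (-c * t) - exp (-s * t)) / (s - c) := by
  have hsc : s - c ≠ 0 := sub_ne_zero.mpr hcs
  have hF : ∀ x ∈ uIcc 0 t, HasDerivAt
      (fun x => -exp (-c * x) * (a + b * (t - x) - b / c) +
        k * c / (s - c) * exp ((s - c) * x - s * t))
      (c * exp (-c * x) * (a + b * (t - x) + k * exp (-s * (t - x)))) x := by
    intro x _
    have hlin : HasDerivAt (fun x => a + b * (t - x) - b / c) (-b) x := by
      simpa using (((hasDerivAt_id' x).const_sub t).const_mul b).const_add a |>.sub_const (b / c)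
    have h := (((hasDerivAt_id' x).const_mul (-c)).exp.fun_neg.fun_mul hlin).fun_add
      ((((hasDerivAt_id' x).const_mul (s - c)).sub_const (s * t)).exp.const_mul (k * c / (s - c)))
    refine h.congr_deriv ?_
    have he : exp (-c * x) * exp (-s * (t - x)) = exp ((s - c) * x - s * t) := by
      rw [← exp_add]; ring_nf
    rw [show c * exp (-c * x) * (a + b * (t - x) + k * exp (-s * (t - x))) =
        c * exp (-c * x) * (a + b * (t - x)) + c * k * (exp (-c * x) * exp (-s * (t - x))) by
      ring, he]
    field_simp
    ring
  rw [integral_eq_sub_of_hasDerivAt hF ((by fun_prop : Continuous _).intervalIntegrable _ _),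
    show (s - c) * t - s * t = -c * t by ring]
  simp only [mul_zero, sub_zero, zero_sub, exp_zero]
  field_simp
  ring

lemma mapsTo_const_sub_uIcc_Ici {t : ℝ} (ht : 0 ≤ t) :
    MapsTo (fun x => t - x) (uIcc 0 t) (Ici 0) := fun x hx => by
  rw [uIcc_of_le ht] at hx
  exact sub_nonneg.mpr hx.2

lemma hasDerivWithinAt_primitive_of_continuousOn_Ici {g : ℝ → ℝ} (hg : ContinuousOn g (Ici 0))
    {r : ℝ} (hr : 0 ≤ r) : HasDerivWithinAt (fun u => ∫ x in (0 : ℝ)..u, g x) (g r) (Ici r) r := by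
  have hIoi : Ioi r ⊆ Ici 0 := fun x hx => hr.trans (le_of_lt hx)
  exact integral_hasDerivWithinAt_right
    ((hg.mono (by simp [uIcc_of_le hr, Icc_subset_Ici_self])).intervalIntegrable)
    ((hg.mono hIoi).stronglyMeasurableAtFilter_nhdsWithin measurableSet_Ioi r)
    ((hg r hr).mono hIoi)

lemma abs_mul_exp_mul_le {a x r T : ℝ} (hr : 0 ≤ r) (hrT : r ≤ T) :
    |a * exp (x * r)| ≤ |a| * exp (|x| * T) := by
  rw [abs_mul, abs_of_pos (exp_pos _)]
  refine mul_le_mul_of_nonneg_left (exp_le_exp.mpr ?_) (abs_nonneg a)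
  calc x * r ≤ |x| * r := mul_le_mul_of_nonneg_right (le_abs_self x) hr
    _ ≤ |x| * T := mul_le_mul_of_nonneg_left hrT (abs_nonneg x)

lemma norm_prod_mul_swap_le {α β K p q : ℝ} (hα : |α| ≤ K) (hβ : |β| ≤ K) :
    ‖(α * q, β * p)‖ ≤ K * ‖(p, q)‖ := by
  have hK : 0 ≤ K := (abs_nonneg α).trans hα
  simp only [Prod.norm_def, Real.norm_eq_abs, abs_mul]
  exact max_le (mul_le_mul hα (le_max_right _ _) (abs_nonneg q) hK)
    (mul_le_mul hβ (le_max_left _ _) (abs_nonneg p) hK)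

lemma eq_zero_of_exp_kernel_system {c d : ℝ} {D U : ℝ → ℝ} (hD : ContinuousOn D (Ici 0))
    (hU : ContinuousOn U (Ici 0))
    (hDU : ∀ t ≥ 0, D t = ∫ x in (0 : ℝ)..t, d * exp (-d * x) * U (t - x))
    (hUD : ∀ t ≥ 0, U t = ∫ x in (0 : ℝ)..t, c * exp (-c * x) * D (t - x)) :
    ∀ t ≥ 0, D t = 0 := by
  intro T hT
  set P := fun r => ∫ u in (0 : ℝ)..r, exp (c * u) * D u
  set Q := fun r => ∫ u in (0 : ℝ)..r, exp (d * u) * U u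
  have hDQ : ∀ r ≥ 0, D r = d * exp (-d * r) * Q r := fun r hr =>
    (hDU r hr).trans (integral_exp_kernel_comp_sub d r U)
  have hUP : ∀ r ≥ 0, U r = c * exp (-c * r) * P r := fun r hr =>
    (hUD r hr).trans (integral_exp_kernel_comp_sub c r D)
  have hgD : ContinuousOn (fun u => exp (c * u) * D u) (Ici 0) := by fun_prop
  have hgU : ContinuousOn (fun u => exp (d * u) * U u) (Ici 0) := by fun_prop
  have hI : uIcc 0 T ⊆ Ici 0 := by rw [uIcc_of_le hT]; exact Icc_subset_Ici_self
  have hPQ_cont : ContinuousOn (fun r => (P r, Q r)) (Icc 0 T) := by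
    rw [← uIcc_of_le hT]
    exact
      (continuousOn_primitive_interval ((hgD.mono hI).integrableOn_compact isCompact_uIcc)).prodMk
        (continuousOn_primitive_interval ((hgU.mono hI).integrableOn_compact isCompact_uIcc))
  have hPQ_deriv : ∀ r ∈ Ico 0 T, HasDerivWithinAt (fun r => (P r, Q r))
      (exp (c * r) * D r, exp (d * r) * U r) (Ici r) r := fun r hr =>
    (hasDerivWithinAt_primitive_of_continuousOn_Ici hgD hr.1).prodMk
      (hasDerivWithinAt_primitive_of_continuousOn_Ici hgU hr.1)
  set K := |d| * exp (|c - d| * T) + |c| * exp (|d - c| * T)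
  have hbound : ∀ r ∈ Ico 0 T, ‖(exp (c * r) * D r, exp (d * r) * U r)‖ ≤ K * ‖(P r, Q r)‖ := by
    intro r ⟨hr, hrT⟩
    have hα : |d * exp ((c - d) * r)| ≤ K :=
      (abs_mul_exp_mul_le hr hrT.le).trans (le_add_of_nonneg_right (by positivity))
    have hβ : |c * exp ((d - c) * r)| ≤ K :=
      (abs_mul_exp_mul_le hr hrT.le).trans (le_add_of_nonneg_left (by positivity))
    convert norm_prod_mul_swap_le (p := P r) (q := Q r) hα hβ using 3
    · rw [hDQ r hr, show (c - d) * r = c * r + -d * r by ring, exp_add]; ring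
    · rw [hUP r hr, show (d - c) * r = d * r + -c * r by ring, exp_add]; ring
  have hQT : Q T = 0 := congrArg Prod.snd <|
    eq_zero_of_abs_deriv_le_mul_abs_self_of_eq_zero_right hPQ_cont hPQ_deriv (by simp [P, Q])
      hbound T (right_mem_Icc.mpr hT)
  rw [hDQ T hT, hQT, mul_zero]

noncomputable def mDown (lc ld t : ℝ) : ℝ :=
  ld / (ld + lc) * (t - (1 - exp (-(ld + lc) * t)) / (lc + ld))

noncomputable def mUp (lc ld t : ℝ) : ℝ :=
  ld / (ld + lc) * t + lc / (ld + lc) ^ 2 * (1 - exp (-(ld + lc) * t))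

section ClosedForm

variable {lc ld : ℝ} (hlc : 0 < lc) (hld : 0 < ld)
include hlc hld

lemma mUp_eq_integral (t : ℝ) :
    mUp lc ld t = t * exp (-lc * t) +
      ∫ x in (0 : ℝ)..t, lc * exp (-lc * x) * (x + mDown lc ld (t - x)) := by
  set k := ld / (ld + lc) / (lc + ld)
  have h := integral_exp_kernel_affine_add_exp hlc.ne' (s := ld + lc) (by linarith)
    (t - k) (ld / (ld + lc) - 1) k t
  rw [(integral_congr fun x _ => by simp only [mDown]; ring).trans h]
  simp only [mUp, k, add_sub_cancel_right]
  field_simp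
  ring

lemma mDown_eq_integral (t : ℝ) :
    mDown lc ld t = ∫ x in (0 : ℝ)..t, ld * exp (-ld * x) * mUp lc ld (t - x) := by
  have h := integral_exp_kernel_affine_add_exp hld.ne' (s := ld + lc) (by linarith)
    (lc / (ld + lc) ^ 2) (ld / (ld + lc)) (-(lc / (ld + lc) ^ 2)) t
  rw [(integral_congr fun x _ => by simp only [mUp]; ring).trans h]
  simp only [mDown, add_sub_cancel_left]
  field_simp
  ring

end ClosedForm

lemma continuous_mUp (lc ld : ℝ) : Continuous (mUp lc ld) := by
  unfold mUp; fun_prop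

lemma abs_mUp_le {lc ld : ℝ} (hlc : 0 < lc) (hld : 0 < ld) {t : ℝ} (ht : 0 ≤ t) :
    |mUp lc ld t| ≤ (1 + lc / (ld + lc) ^ 2) * (1 + t) := by
  have ha₀ : 0 ≤ ld / (ld + lc) := by positivity
  have ha : ld / (ld + lc) ≤ 1 := (div_le_one (by positivity)).mpr (by linarith)
  have hb : 0 ≤ lc / (ld + lc) ^ 2 := by positivity
  have he₀ : 0 ≤ 1 - exp (-(ld + lc) * t) := sub_nonneg.mpr (exp_le_one_iff.mpr (by nlinarith))
  have he : 1 - exp (-(ld + lc) * t) ≤ 1 := by linarith [exp_pos (-(ld + lc) * t)]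
  unfold mUp
  rw [abs_of_nonneg (add_nonneg (mul_nonneg ha₀ ht) (mul_nonneg hb he₀))]
  nlinarith [mul_le_mul_of_nonneg_left he hb, mul_le_mul_of_nonneg_right ha ht]

lemma eq_mDown_of_eq_integral {lc ld : ℝ} (hlc : 0 < lc) (hld : 0 < ld) {Nd Nu : ℝ → ℝ}
    (hNd : ContinuousOn Nd (Ici 0)) (hNu : ContinuousOn Nu (Ici 0))
    (hNu_eq : ∀ t ≥ (0 : ℝ), Nu t = t * exp (-lc * t) +
      ∫ x in (0 : ℝ)..t, lc * exp (-lc * x) * (x + Nd (t - x)))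
    (hNd_eq : ∀ t ≥ (0 : ℝ), Nd t = ∫ x in (0 : ℝ)..t, ld * exp (-ld * x) * Nu (t - x)) :
    ∀ t ≥ (0 : ℝ), Nd t = mDown lc ld t := by
  have hmD : ContinuousOn (mDown lc ld) (Ici 0) := by unfold mDown; fun_prop
  have hmU : ContinuousOn (mUp lc ld) (Ici 0) := (continuous_mUp lc ld).continuousOn
  have hU : ∀ t ≥ 0, (Nu - mUp lc ld) t =
      ∫ x in (0 : ℝ)..t, lc * exp (-lc * x) * (Nd - mDown lc ld) (t - x) := by
    intro t ht
    have hmaps := mapsTo_const_sub_uIcc_Ici ht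
    rw [Pi.sub_apply, hNu_eq t ht, mUp_eq_integral hlc hld, add_sub_add_left_eq_sub,
      ← integral_sub (ContinuousOn.intervalIntegrable (by fun_prop (disch := exact hmaps)))
        (ContinuousOn.intervalIntegrable (by fun_prop (disch := exact hmaps)))]
    congr 1 with x
    simp only [Pi.sub_apply]
    ring
  have hD : ∀ t ≥ 0, (Nd - mDown lc ld) t =
      ∫ x in (0 : ℝ)..t, ld * exp (-ld * x) * (Nu - mUp lc ld) (t - x) := by
    intro t ht
    have hmaps := mapsTo_const_sub_uIcc_Ici ht
    rw [Pi.sub_apply, hNd_eq t ht, mDown_eq_integral hlc hld,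
      ← integral_sub (ContinuousOn.intervalIntegrable (by fun_prop (disch := exact hmaps)))
        (ContinuousOn.intervalIntegrable (by fun_prop (disch := exact hmaps)))]
    congr 1 with x
    simp only [Pi.sub_apply]
    ring
  intro t ht
  exact sub_eq_zero.mp (eq_zero_of_exp_kernel_system (hNd.sub hmD) (hNu.sub hmU) hD hU t ht)

theorem stmt_12 (lc ld : ℝ) (hlc : 0 < lc) (hld : 0 < ld)
    (M : ℝ → ℝ)
    (hM : ∀ t, M t = (ld / (ld + lc)) * (t - (1 - Real.exp (-(ld + lc) * t)) / (lc + ld))) :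
    -- M is part of a continuous solution pair of at most linear growth
    (∃ Mup : ℝ → ℝ, ContinuousOn Mup (Set.Ici 0) ∧
      (∃ C > (0 : ℝ), ∀ t ≥ (0 : ℝ), |Mup t| ≤ C * (1 + t)) ∧
      (∀ t ≥ (0 : ℝ),
        Mup t = t * Real.exp (-lc * t) +
          ∫ x in (0 : ℝ)..t, lc * Real.exp (-lc * x) * (x + M (t - x))) ∧
      (∀ t ≥ (0 : ℝ),
        M t = ∫ x in (0 : ℝ)..t, ld * Real.exp (-ld * x) * Mup (t - x))) ∧
    -- uniqueness: any continuous solution pair of at most linear growth has the same M↓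
    (∀ Ndown Nup : ℝ → ℝ,
      ContinuousOn Ndown (Set.Ici 0) → ContinuousOn Nup (Set.Ici 0) →
      (∃ C > (0 : ℝ), ∀ t ≥ (0 : ℝ), |Ndown t| ≤ C * (1 + t)) →
      (∃ C > (0 : ℝ), ∀ t ≥ (0 : ℝ), |Nup t| ≤ C * (1 + t)) →
      (∀ t ≥ (0 : ℝ),
        Nup t = t * Real.exp (-lc * t) +
          ∫ x in (0 : ℝ)..t, lc * Real.exp (-lc * x) * (x + Ndown (t - x))) →
      (∀ t ≥ (0 : ℝ),
        Ndown t = ∫ x in (0 : ℝ)..t, ld * Real.exp (-ld * x) * Nup (t - x)) →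
      ∀ t ≥ (0 : ℝ), Ndown t = M t) := by
  obtain rfl : M = mDown lc ld := funext hM
  refine ⟨⟨mUp lc ld, (continuous_mUp lc ld).continuousOn,
    ⟨_, by positivity, fun t ht => abs_mUp_le hlc hld ht⟩,
    fun t _ => mUp_eq_integral hlc hld t, fun t _ => mDown_eq_integral hlc hld t⟩, ?_⟩
  exact fun _ _ hNd hNu _ _ => eq_mDown_of_eq_integral hlc hld hNd hNu
end

section
/- In the setting of the previous DP, suppose the per-stage cost c(t,b) → c*(b) and the survival probability P(r_t > b) → P(r > b) as t → ∞ for each action b, with P(r > b) < 1 for all b in the finite action set. Then lim_{t→∞} V*(t) = min_b v(b) where v(b) = c*(b)/(1 − P(r > b)). -/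
/-!
Write `v b = c* b / (1 - P b)`. For large `t` the DP behaves like the stationary one, whose
value for the stationary policy `b` is `v b`.

Upper bound: if `v b < x`, then `c t b + p t b * x < x` for `t ≥ T`, so
`x + (T - t)⁺ · C`, with `C` a bound on `c`, is a nonnegative supersolution of the Bellman
equation (positive actions make the padding drop by at least `C` per step). Iterating the
Bellman operator from it decreases monotonically to a nonnegative fixed point, which dominates
`V*` by minimality; hence eventually `V* ≤ x`.

Lower bound: with `m = liminf V*`, passing to the limit in `V* = L V*` gives
`min_b (c* b + P b * m) ≤ m`, i.e. `v b ≤ m` for some `b`.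
-/

open Filter Topology

theorem exists_fixedPoint_nonneg_le {ι : Type*} {L : (ι → ℝ) → ι → ℝ} (hmono : Monotone L)
    (hcont : Continuous L) (hnonneg : ∀ V, 0 ≤ V → 0 ≤ L V) {W : ι → ℝ} (hW : 0 ≤ W)
    (hLW : L W ≤ W) : ∃ U, L U = U ∧ 0 ≤ U ∧ U ≤ W := by
  have hiter_nonneg : ∀ n, 0 ≤ L^[n] W := by
    intro n
    induction n with
    | zero => exact hW
    | succ n ih => rw [Function.iterate_succ_apply']; exact hnonneg _ ih
  have hbdd : BddBelow (Set.range fun n => L^[n] W) :=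
    ⟨0, by rintro _ ⟨n, rfl⟩; exact hiter_nonneg n⟩
  have hlim := tendsto_atTop_ciInf (hmono.antitone_iterate_of_map_le hLW) hbdd
  refine ⟨⨅ n, L^[n] W, tendsto_nhds_unique ((hcont.tendsto _).comp hlim) ?_,
    le_ciInf hiter_nonneg, ciInf_le hbdd 0⟩
  simpa only [Function.comp_def, ← Function.iterate_succ_apply' L] using
    hlim.comp (tendsto_add_atTop_nat 1)

section Bellman

variable {B : Finset ℕ} (hB : B.Nonempty) (c p : ℕ → ℕ → ℝ)

noncomputable def bellman (V : ℕ → ℝ) (t : ℕ) : ℝ :=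
  B.inf' hB fun b => c t b + p t b * V (t + b)

variable {hB c p}

theorem bellman_apply_le_apply (hp0 : ∀ t b, 0 ≤ p t b) {V W : ℕ → ℝ} {t : ℕ}
    (h : ∀ s ≥ t, V s ≤ W s) : bellman hB c p V t ≤ bellman hB c p W t :=
  Finset.le_inf' hB _ fun b hb => (Finset.inf'_le _ hb).trans <|
    add_le_add_right (mul_le_mul_of_nonneg_left (h _ (Nat.le_add_right t b)) (hp0 t b)) _

theorem bellman_mono (hp0 : ∀ t b, 0 ≤ p t b) : Monotone (bellman hB c p) :=
  fun _ _ h _ => bellman_apply_le_apply hp0 fun s _ => h s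

theorem bellman_nonneg (hc0 : ∀ t b, 0 ≤ c t b) (hp0 : ∀ t b, 0 ≤ p t b) {V : ℕ → ℝ}
    (hV : 0 ≤ V) : 0 ≤ bellman hB c p V :=
  fun t => Finset.le_inf' hB _ fun b _ => add_nonneg (hc0 t b) (mul_nonneg (hp0 t b) (hV _))

theorem continuous_bellman : Continuous (bellman hB c p) :=
  continuous_pi fun t => Continuous.finset_inf'_apply hB fun b _ =>
    continuous_const.add (continuous_const.mul (continuous_apply (t + b)))

theorem tendsto_bellman_const {cstar P : ℕ → ℝ}
    (hc : ∀ b ∈ B, Tendsto (fun t => c t b) atTop (𝓝 (cstar b)))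
    (hp : ∀ b ∈ B, Tendsto (fun t => p t b) atTop (𝓝 (P b))) (y : ℝ) :
    Tendsto (bellman hB c p fun _ => y) atTop (𝓝 (B.inf' hB fun b => cstar b + P b * y)) :=
  Tendsto.finset_inf'_nhds_apply hB fun b hb => (hc b hb).add ((hp b hb).mul_const y)

theorem bellman_countdown_le (hBpos : ∀ b ∈ B, 0 < b) (hp : ∀ t b, p t b ∈ Set.Icc (0 : ℝ) 1)
    {C x : ℝ} (hC : ∀ t b, c t b ≤ C) (hC0 : 0 ≤ C) (hx : 0 ≤ x) {b₀ T : ℕ} (hb₀ : b₀ ∈ B)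
    (hT : ∀ t ≥ T, c t b₀ + p t b₀ * x ≤ x) :
    bellman hB c p (fun t => x + (T - t : ℕ) * C) ≤ fun t => x + (T - t : ℕ) * C := by
  intro t
  refine (Finset.inf'_le _ hb₀).trans ?_
  obtain ⟨hp0, hp1⟩ := hp t b₀
  rcases le_or_gt T t with hTt | htT
  · simpa [Nat.sub_eq_zero_of_le hTt, Nat.sub_eq_zero_of_le (hTt.trans (Nat.le_add_right t b₀))]
      using hT t hTt
  · have hstep : ((T - (t + b₀) : ℕ) : ℝ) + 1 ≤ (T - t : ℕ) := by
      have := hBpos b₀ hb₀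
      exact_mod_cast (by omega : T - (t + b₀) + 1 ≤ T - t)
    have hW0 : 0 ≤ x + (T - (t + b₀) : ℕ) * C := by positivity
    nlinarith [hC t b₀, mul_le_mul_of_nonneg_right hstep hC0]

end Bellman

section ValueFunction

variable {B : Finset ℕ} {hB : B.Nonempty} {c p : ℕ → ℕ → ℝ} {V : ℕ → ℝ}

theorem eventually_le_of_forall_fixedPoint_le (hBpos : ∀ b ∈ B, 0 < b)
    (hc0 : ∀ t b, 0 ≤ c t b) {C : ℝ} (hC : ∀ t b, c t b ≤ C)
    (hp : ∀ t b, p t b ∈ Set.Icc (0 : ℝ) 1)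
    (hV : ∀ W, 0 ≤ W → bellman hB c p W = W → V ≤ W) {b : ℕ} (hb : b ∈ B) {cb Pb x : ℝ}
    (hc : Tendsto (fun t => c t b) atTop (𝓝 cb)) (hpb : Tendsto (fun t => p t b) atTop (𝓝 Pb))
    (hx : 0 ≤ x) (hlt : cb + Pb * x < x) : ∀ᶠ t in atTop, V t ≤ x := by
  have hp0 : ∀ t b, 0 ≤ p t b := fun t b => (hp t b).1
  have hC0 : 0 ≤ C := (hc0 0 0).trans (hC 0 0)
  obtain ⟨T, hT⟩ := eventually_atTop.1 ((hc.add (hpb.mul_const x)).eventually_lt_const hlt)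
  obtain ⟨U, hU, hU0, hUW⟩ := exists_fixedPoint_nonneg_le (bellman_mono hp0) continuous_bellman
    (fun _ => bellman_nonneg hc0 hp0) (fun _ => by positivity : 0 ≤ fun t => x + (T - t : ℕ) * C)
    (bellman_countdown_le hBpos hp hC hC0 hx hb fun t ht => (hT t ht).le)
  filter_upwards [eventually_ge_atTop T] with t ht
  simpa [Nat.sub_eq_zero_of_le ht] using (hV U hU0 hU t).trans (hUW t)

theorem inf'_add_mul_liminf_le_liminf (hp0 : ∀ t b, 0 ≤ p t b) {cstar P : ℕ → ℝ}
    (hc : ∀ b ∈ B, Tendsto (fun t => c t b) atTop (𝓝 (cstar b)))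
    (hp : ∀ b ∈ B, Tendsto (fun t => p t b) atTop (𝓝 (P b)))
    (hV : bellman hB c p V = V) (hV0 : 0 ≤ V) (hVbdd : IsBoundedUnder (· ≤ ·) atTop V) :
    B.inf' hB (fun b => cstar b + P b * liminf V atTop) ≤ liminf V atTop := by
  set m := liminf V atTop
  have hF : Continuous fun y => B.inf' hB fun b => cstar b + P b * y :=
    Continuous.finset_inf'_apply hB fun b _ => continuous_const.add (continuous_const_mul _)
  have hbelow : ∀ y < m, (B.inf' hB fun b => cstar b + P b * y) ≤ m := by
    intro y hy
    obtain ⟨T, hT⟩ := eventually_atTop.1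
      (eventually_lt_of_lt_liminf hy (isBoundedUnder_of_eventually_ge (.of_forall hV0)))
    have hlim := tendsto_bellman_const (hB := hB) hc hp y
    rw [← hlim.liminf_eq]
    refine liminf_le_liminf ?_ hlim.isBoundedUnder_ge hVbdd.isCoboundedUnder_ge
    filter_upwards [eventually_ge_atTop T] with t ht
    calc bellman hB c p (fun _ => y) t ≤ bellman hB c p V t :=
          bellman_apply_le_apply hp0 fun s hs => (hT s (ht.trans hs)).le
      _ = V t := congrFun hV t
  exact le_of_tendsto (hF.tendsto m |>.mono_left nhdsWithin_le_nhds)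
    (eventually_nhdsWithin_of_forall (s := Set.Iio m) hbelow)

end ValueFunction

theorem stmt_14 (B : Finset ℕ) (hB : B.Nonempty) (hBpos : ∀ b ∈ B, 0 < b)
    (c : ℕ → ℕ → ℝ) (p : ℕ → ℕ → ℝ)
    (hc0 : ∀ t b, 0 ≤ c t b) (hcbdd : ∃ Cb : ℝ, ∀ t b, c t b ≤ Cb)
    (hp : ∀ t b, p t b ∈ Set.Icc (0 : ℝ) 1)
    (L : (ℕ → ℝ) → (ℕ → ℝ))
    (hL : ∀ V t, L V t = B.inf' hB (fun b => c t b + p t b * V (t + b)))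
    (Vstar : ℕ → ℝ)
    -- V* is the optimal value: the smallest nonnegative fixed point of the Bellman operator
    (hfix : L Vstar = Vstar) (hnn : ∀ t, 0 ≤ Vstar t)
    (hsmall : ∀ W : ℕ → ℝ, (∀ t, 0 ≤ W t) → L W = W → ∀ t, Vstar t ≤ W t)
    (cstar P : ℕ → ℝ)
    (hclim : ∀ b ∈ B, Tendsto (fun t => c t b) atTop (nhds (cstar b)))
    (hplim : ∀ b ∈ B, Tendsto (fun t => p t b) atTop (nhds (P b)))
    (hPlt : ∀ b ∈ B, P b < 1) :
    Tendsto Vstar atTop (nhds (B.inf' hB fun b => cstar b / (1 - P b))) := by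
  obtain ⟨C, hC⟩ := hcbdd
  obtain rfl : L = bellman hB c p := funext fun V => funext (hL V)
  have hgap : ∀ b ∈ B, 0 < 1 - P b := fun b hb => sub_pos.2 (hPlt b hb)
  have hupper : ∀ x > B.inf' hB fun b => cstar b / (1 - P b), ∀ᶠ t in atTop, Vstar t ≤ x := by
    intro x hx
    obtain ⟨b, hb, hvb⟩ := (Finset.inf'_lt_iff hB).1 hx
    have hcs0 : 0 ≤ cstar b := ge_of_tendsto' (hclim b hb) fun t => hc0 t b
    refine eventually_le_of_forall_fixedPoint_le hBpos hc0 hC hp hsmall hb (hclim b hb)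
      (hplim b hb) ((div_nonneg hcs0 (hgap b hb).le).trans hvb.le) ?_
    rw [div_lt_iff₀ (hgap b hb)] at hvb
    linarith
  have hbdd_le : IsBoundedUnder (· ≤ ·) atTop Vstar := isBoundedUnder_of_eventually_le
    (hupper _ (lt_add_one _))
  have hbdd_ge : IsBoundedUnder (· ≥ ·) atTop Vstar := isBoundedUnder_of_eventually_ge
    (.of_forall hnn)
  refine tendsto_of_le_liminf_of_limsup_le ?_ (le_of_forall_gt_imp_ge_of_dense fun x hx =>
    limsup_le_of_le hbdd_ge.isCoboundedUnder_le (hupper x hx)) hbdd_le hbdd_ge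
  obtain ⟨b, hb, hbm⟩ := (Finset.inf'_le_iff hB).1 <|
    inf'_add_mul_liminf_le_liminf (fun t b => (hp t b).1) hclim hplim hfix hnn hbdd_le
  refine (Finset.inf'_le _ hb).trans ((div_le_iff₀ (hgap b hb)).2 ?_)
  linarith
end

section
/- For the stationary fixed-point equation V = c(b) + P_off(b)·V with P_off(b) < 1, the solution is V(b) = c(b)/(1 − P_off(b)); with c(b) = c_s + M_d(b), P_off(b) = λ_c/(λ_c+λ_d) + (λ_d/(λ_c+λ_d))e^{−(λ_c+λ_d)b}, and M_d as in the exponential case, setting dV/db = 0 yields exactly the equation e^{−(λ_c+λ_d)b}(1 + (c_s/λ_d)(λ_c+λ_d)² + b(λ_c+λ_d)) = 1. -/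
open Real

theorem stmt_15 (lc ld cs : ℝ) (hlc : 0 < lc) (hld : 0 < ld) (hcs : 0 < cs)
    (Md Poff V : ℝ → ℝ)
    (hMd : ∀ b, Md b = (ld / (ld + lc)) * (b - (1 - Real.exp (-(ld + lc) * b)) / (lc + ld)))
    (hPoff : ∀ b, Poff b = lc / (lc + ld) + (ld / (lc + ld)) * Real.exp (-(lc + ld) * b))
    (hV : ∀ b, V b = (cs + Md b) / (1 - Poff b)) :
    (∀ b > (0 : ℝ), ∀ W : ℝ, (W = cs + Md b + Poff b * W ↔ W = (cs + Md b) / (1 - Poff b))) ∧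
    (∀ b > (0 : ℝ), deriv V b = 0 ↔
      Real.exp (-(lc + ld) * b) * (1 + (cs / ld) * (lc + ld) ^ 2 + b * (lc + ld)) = 1) := by
  have hs : (0 : ℝ) < lc + ld := by linarith
  have hs' : lc + ld ≠ 0 := ne_of_gt hs
  have hld' : ld ≠ 0 := ne_of_gt hld
  -- For b > 0, exp(-(lc+ld)*b) < 1
  have hElt : ∀ b : ℝ, 0 < b → Real.exp (-(lc + ld) * b) < 1 := by
    intro b hb
    apply Real.exp_lt_one_iff.mpr
    nlinarith
  have hPlt : ∀ b : ℝ, 0 < b → Poff b < 1 := by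
    intro b hb
    rw [hPoff]
    have hE := hElt b hb
    have h1 : lc / (lc + ld) + ld / (lc + ld) = 1 := by field_simp
    have h2 : 0 < ld / (lc + ld) := div_pos hld hs
    nlinarith
  constructor
  · intro b hb W
    have hden : 1 - Poff b ≠ 0 := by have := hPlt b hb; intro h; linarith [h]
    rw [eq_div_iff hden]
    constructor <;> intro h <;> linear_combination h
  · intro b hb
    set g : ℝ → ℝ := fun x => (cs * (lc + ld) / ld + x) / (1 - Real.exp (-(lc + ld) * x)) - 1 / (lc + ld) with hg
    have hVg : ∀ x : ℝ, 0 < x → V x = g x := by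
      intro x hx
      have hE := hElt x hx
      have hE' : 1 - Real.exp (-(lc + ld) * x) ≠ 0 := by intro h; linarith
      rw [hV, hMd, hPoff, hg]
      have harg : (-(ld + lc) * x) = (-(lc + ld) * x) := by ring
      rw [harg]
      have h1 : 1 - (lc / (lc + ld) + ld / (lc + ld) * Real.exp (-(lc + ld) * x))
          = ld / (lc + ld) * (1 - Real.exp (-(lc + ld) * x)) := by field_simp; ring
      show _ = (cs * (lc + ld) / ld + x) / (1 - Real.exp (-(lc + ld) * x)) - 1 / (lc + ld)
      rw [h1, div_sub_div _ _ hE' hs',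
        div_eq_div_iff (mul_ne_zero (div_ne_zero hld' hs') hE') (mul_ne_zero hE' hs')]
      have hlc' : ld + lc ≠ 0 := by rw [add_comm]; exact hs'
      field_simp
      ring
    have heq : deriv V b = deriv g b := by
      apply Filter.EventuallyEq.deriv_eq
      filter_upwards [isOpen_Ioi.mem_nhds (show b ∈ Set.Ioi (0:ℝ) from hb)] with x hx
      exact hVg x hx
    set E := Real.exp (-(lc + ld) * b) with hEdef
    have hE : E < 1 := hElt b hb
    have hE' : 1 - E ≠ 0 := by intro h; linarith
    have hnum : HasDerivAt (fun x : ℝ => cs * (lc + ld) / ld + x) 1 b :=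
      (hasDerivAt_id b).const_add _
    have hexp : HasDerivAt (fun x : ℝ => Real.exp (-(lc + ld) * x)) (E * (-(lc + ld))) b := by
      have h1 : HasDerivAt (fun x : ℝ => -(lc + ld) * x) (-(lc + ld)) b := by
        simpa using (hasDerivAt_id b).const_mul (-(lc + ld))
      exact h1.exp
    have hden : HasDerivAt (fun x : ℝ => 1 - Real.exp (-(lc + ld) * x)) (-(E * (-(lc + ld)))) b :=
      hexp.const_sub 1
    have hdiv := (hnum.div hden hE').sub_const (1 / (lc + ld))
    have hderiv : deriv g b =
        (1 * (1 - E) - (cs * (lc + ld) / ld + b) * (-(E * (-(lc + ld))))) / (1 - E) ^ 2 := by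
      rw [hg]
      exact hdiv.deriv
    rw [heq, hderiv]
    rw [div_eq_zero_iff]
    have hE2 : (1 - E) ^ 2 ≠ 0 := pow_ne_zero _ hE'
    constructor
    · rintro (h | h)
      · linear_combination -h
      · exact absurd h hE2
    · intro h
      left
      linear_combination -h
end
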